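/- arXiv:2310.06969 — 3 statements merged into one kernel-verified Lean document; each statement's English description precedes it below -/
import Mathlib

section
/- Under consistency and unconfoundedness, the value function V(d) = E[Y(1)d(X) + Y(0)(1-d(X))] of the incremental propensity score policy equals the inverse-probability-weighting expression E[Y(δ(X)A + 1 - A) / (δ(X)π(X) + 1 - π(X))]. -/
open MeasureTheory ProbabilityTheory
open scoped ENNReal NNReal

section Aux

variable {Ω : Type*} {m : MeasurableSpace Ω} {mΩ : MeasurableSpace Ω} {μ : Measure Ω}
  [IsProbabilityMeasure μ]

/-- The conditional expectation of an indicator is a.e. in `[0,1]`. -/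
lemma aux_condExp_indicator_Icc (hm : m ≤ mΩ) {s : Set Ω} (hs : MeasurableSet s) :
    ∀ᵐ ω ∂μ, (μ⟦s | m⟧) ω ∈ Set.Icc (0:ℝ) 1 := by
  have h0 : 0 ≤ᵐ[μ] μ⟦s | m⟧ :=
    condExp_nonneg (Filter.Eventually.of_forall fun ω =>
      Set.indicator_nonneg (fun _ _ => zero_le_one) ω)
  have h1 : μ⟦s | m⟧ ≤ᵐ[μ] μ[(fun _ => (1:ℝ)) | m] := by
    refine condExp_mono ((integrable_const (1:ℝ)).indicator hs) (integrable_const 1)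
      (Filter.Eventually.of_forall fun ω => ?_)
    exact Set.indicator_le_self' (fun _ _ => zero_le_one) ω
  rw [condExp_const hm] at h1
  filter_upwards [h0, h1] with ω hω0 hω1
  exact ⟨hω0, hω1⟩

/-- For bounded `m`-measurable `q` and integrable `V`,
`∫ q ⬝ μ[V|m] = ∫ q ⬝ V`. -/
lemma aux_integral_mul_condExp (hm : m ≤ mΩ) {q V : Ω → ℝ}
    (hq : StronglyMeasurable[m] q) {c : ℝ} (hqbd : ∀ᵐ ω ∂μ, |q ω| ≤ c)
    (hV : Integrable V μ) :
    ∫ ω, q ω * (μ[V | m]) ω ∂μ = ∫ ω, q ω * V ω ∂μ := by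
  have hqV : Integrable (fun ω => q ω * V ω) μ :=
    hV.bdd_mul ((hq.mono hm).aestronglyMeasurable)
      (hqbd.mono fun ω h => by simpa [Real.norm_eq_abs] using h)
  have hpull : μ[(fun ω => q ω * V ω) | m] =ᵐ[μ] fun ω => q ω * (μ[V | m]) ω := by
    have := condExp_mul_of_stronglyMeasurable_left hq (μ := μ) (g := V) hqV hV
    exact this
  calc ∫ ω, q ω * (μ[V | m]) ω ∂μ
      = ∫ ω, (μ[(fun ω => q ω * V ω) | m]) ω ∂μ := (integral_congr_ae hpull).symm
    _ = ∫ ω, q ω * V ω ∂μ := integral_condExp hm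

/-- If two measures agree on the sigma-algebra generated by `W`, integrals of `W` agree. -/
lemma aux_integral_eq_of_eq_on_comap {Ω : Type*} {mΩ : MeasurableSpace Ω}
    (ν₁ ν₂ : Measure Ω) {W : Ω → ℝ} (hW : Measurable W)
    (h : ∀ u : Set ℝ, MeasurableSet u → ν₁ (W ⁻¹' u) = ν₂ (W ⁻¹' u)) :
    ∫ ω, W ω ∂ν₁ = ∫ ω, W ω ∂ν₂ := by
  have hmW : MeasurableSpace.comap W Real.measurableSpace ≤ mΩ := hW.comap_le
  have hWsm : StronglyMeasurable[MeasurableSpace.comap W Real.measurableSpace] W :=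
    Measurable.stronglyMeasurable (measurable_iff_comap_le.mpr le_rfl)
  have htrim : ν₁.trim hmW = ν₂.trim hmW := by
    refine @Measure.ext Ω (MeasurableSpace.comap W Real.measurableSpace) _ _ (fun t ht => ?_)
    rw [trim_measurableSet_eq hmW ht, trim_measurableSet_eq hmW ht]
    obtain ⟨u, hu, rfl⟩ := ht
    exact h u hu
  rw [integral_trim hmW hWsm, integral_trim hmW hWsm, htrim]

/-- Core factorization: if the indicator condexp over `s` and preimages of `W` factorize,
then `μ[1_s W | m] = μ⟦s|m⟧ ⬝ μ[W|m]`. -/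
lemma aux_core (hm : m ≤ mΩ) {s : Set Ω} (hs : MeasurableSet s)
    {W : Ω → ℝ} (hW : Measurable W) (hWint : Integrable W μ)
    (hind : ∀ u : Set ℝ, MeasurableSet u →
      (μ⟦s ∩ W ⁻¹' u | m⟧) =ᵐ[μ] μ⟦s | m⟧ * μ⟦W ⁻¹' u | m⟧) :
    μ[s.indicator W | m] =ᵐ[μ] fun ω => (μ⟦s | m⟧) ω * (μ[W | m]) ω := by
  haveI : SigmaFinite (μ.trim hm) := by
    have : IsFiniteMeasure (μ.trim hm) := isFiniteMeasure_trim hm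
    infer_instance
  set c : Ω → ℝ := μ⟦s | m⟧ with hc
  have hc01 : ∀ᵐ ω ∂μ, c ω ∈ Set.Icc (0:ℝ) 1 := aux_condExp_indicator_Icc hm hs
  -- main set-integral identity
  have h_eq : ∀ E : Set Ω, MeasurableSet[m] E →
      ∫ ω in E, c ω * (μ[W | m]) ω ∂μ = ∫ ω in E, s.indicator W ω ∂μ := by
    intro E hE
    have hE' : MeasurableSet E := hm E hE
    set q : Ω → ℝ := E.indicator c with hqdef
    have hq : StronglyMeasurable[m] q := stronglyMeasurable_condExp.indicator hE
    have hq01 : ∀ᵐ ω ∂μ, q ω ∈ Set.Icc (0:ℝ) 1 := by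
      filter_upwards [hc01] with ω hω
      by_cases h : ω ∈ E
      · simpa [hqdef, Set.indicator_of_mem h] using hω
      · simp [hqdef, Set.indicator_of_notMem h]
    have hqbd : ∀ᵐ ω ∂μ, |q ω| ≤ 1 := by
      filter_upwards [hq01] with ω hω
      rw [abs_le]; exact ⟨le_trans (by norm_num) hω.1, hω.2⟩
    have hqint : Integrable q μ :=
      ⟨(hq.mono hm).aestronglyMeasurable,
        HasFiniteIntegral.of_bounded (C := 1)
          (hqbd.mono fun ω h => by simpa [Real.norm_eq_abs] using h)⟩
    -- turn a set integral over E of (c ⬝ V) into ∫ q ⬝ V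
    have hind_step : ∀ V : Ω → ℝ,
        ∫ ω in E, c ω * V ω ∂μ = ∫ ω, q ω * V ω ∂μ := by
      intro V
      rw [← integral_indicator hE']
      congr 1
      funext ω
      by_cases h : ω ∈ E
      · simp [hqdef, Set.indicator_of_mem h]
      · simp [hqdef, Set.indicator_of_notMem h]
    set dq : Ω → ℝ≥0 := fun ω => (q ω).toNNReal with hdqdef
    have hdq : Measurable dq := ((hq.mono hm).measurable).real_toNNReal
    set ν₂ : Measure Ω := μ.withDensity (fun ω => (dq ω : ℝ≥0∞)) with hν₂def
    -- the two measures agree on mW-measurable sets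
    have keyEq : ∀ u : Set ℝ, MeasurableSet u →
        (μ.restrict (E ∩ s)) (W ⁻¹' u) = ν₂ (W ⁻¹' u) := by
      intro u hu
      have hWu : MeasurableSet (W ⁻¹' u) := hW hu
      have r1 : ∫ ω in E, (μ⟦s ∩ W ⁻¹' u | m⟧) ω ∂μ
          = (μ (E ∩ (s ∩ W ⁻¹' u))).toReal := by
        rw [setIntegral_condExp hm ((integrable_const (1:ℝ)).indicator (hs.inter hWu)) hE,
          setIntegral_indicator (hs.inter hWu), setIntegral_const]
        simp [Measure.real]
      have r2 : ∫ ω in E, (μ⟦s ∩ W ⁻¹' u | m⟧) ω ∂μ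
          = ∫ ω in E, c ω * (μ⟦W ⁻¹' u | m⟧) ω ∂μ := by
        refine integral_congr_ae (ae_restrict_of_ae ?_)
        filter_upwards [hind u hu] with ω hω
        simpa using hω
      have hindic_int : Integrable ((W ⁻¹' u).indicator (fun _ => (1:ℝ))) μ :=
        (integrable_const (1:ℝ)).indicator hWu
      have r3 : ∫ ω in E, c ω * (μ⟦W ⁻¹' u | m⟧) ω ∂μ
          = ∫ ω, q ω * (W ⁻¹' u).indicator (fun _ => (1:ℝ)) ω ∂μ := by
        rw [hind_step (μ⟦W ⁻¹' u | m⟧)]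
        exact aux_integral_mul_condExp hm hq hqbd hindic_int
      have r4 : ∫ ω, q ω * (W ⁻¹' u).indicator (fun _ => (1:ℝ)) ω ∂μ
          = ∫ ω in W ⁻¹' u, q ω ∂μ := by
        rw [← integral_indicator hWu]
        congr 1
        funext ω
        by_cases h : ω ∈ W ⁻¹' u
        · simp [Set.indicator_of_mem h]
        · simp [Set.indicator_of_notMem h]
      have hreal : (μ (E ∩ (s ∩ W ⁻¹' u))).toReal = ∫ ω in W ⁻¹' u, q ω ∂μ := by
        rw [← r1, r2, r3, r4]
      have hofReal : μ (E ∩ (s ∩ W ⁻¹' u))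
          = ENNReal.ofReal (∫ ω in W ⁻¹' u, q ω ∂μ) := by
        rw [← hreal, ENNReal.ofReal_toReal (measure_ne_top μ _)]
      calc (μ.restrict (E ∩ s)) (W ⁻¹' u)
          = μ ((W ⁻¹' u) ∩ (E ∩ s)) := Measure.restrict_apply hWu
        _ = μ (E ∩ (s ∩ W ⁻¹' u)) := by rw [Set.inter_comm, Set.inter_assoc]
        _ = ENNReal.ofReal (∫ ω in W ⁻¹' u, q ω ∂μ) := hofReal
        _ = ∫⁻ ω in W ⁻¹' u, ENNReal.ofReal (q ω) ∂μ := by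
            exact ofReal_integral_eq_lintegral_ofReal hqint.integrableOn
              (ae_restrict_of_ae (hq01.mono fun ω h => h.1))
        _ = ∫⁻ ω in W ⁻¹' u, (dq ω : ℝ≥0∞) ∂μ := rfl
        _ = ν₂ (W ⁻¹' u) := (withDensity_apply _ hWu).symm
    have e1 : ∫ ω in E ∩ s, W ω ∂μ = ∫ ω, W ω ∂ν₂ :=
      aux_integral_eq_of_eq_on_comap (μ.restrict (E ∩ s)) ν₂ hW keyEq
    have e2 : ∫ ω, W ω ∂ν₂ = ∫ ω, dq ω • W ω ∂μ :=
      integral_withDensity_eq_integral_smul hdq W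
    have e3 : ∫ ω, dq ω • W ω ∂μ = ∫ ω, q ω * W ω ∂μ := by
      refine integral_congr_ae ?_
      filter_upwards [hq01] with ω hω
      simp [hdqdef, NNReal.smul_def, Real.coe_toNNReal _ hω.1]
    calc ∫ ω in E, c ω * (μ[W | m]) ω ∂μ
        = ∫ ω, q ω * (μ[W | m]) ω ∂μ := hind_step _
      _ = ∫ ω, q ω * W ω ∂μ := aux_integral_mul_condExp hm hq hqbd hWint
      _ = ∫ ω in E ∩ s, W ω ∂μ := by rw [e1, e2, e3]
      _ = ∫ ω in E, s.indicator W ω ∂μ := (setIntegral_indicator hs).symm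
  -- conclude via characterization of condexp
  have hg_int : Integrable (fun ω => c ω * (μ[W | m]) ω) μ := by
    refine integrable_condExp.bdd_mul (c := 1)
      ((stronglyMeasurable_condExp.mono hm).aestronglyMeasurable) ?_
    filter_upwards [hc01] with ω hω
    rw [Real.norm_eq_abs, abs_le]
    exact ⟨le_trans (by norm_num) hω.1, hω.2⟩
  refine (ae_eq_condExp_of_forall_setIntegral_eq hm (hWint.indicator hs)
    (fun E _ _ => hg_int.integrableOn) (fun E hE _ => h_eq E hE) ?_).symm
  exact (stronglyMeasurable_condExp.mul stronglyMeasurable_condExp).aestronglyMeasurable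

/-- Conditional independence with a `{0,1}`-valued variable gives condexp factorization. -/
lemma aux_stepA [StandardBorelSpace Ω] (hm : m ≤ mΩ) {B W : Ω → ℝ}
    (hB : Measurable B) (hBbin : ∀ ω, B ω = 0 ∨ B ω = 1)
    (hW : Measurable W) (hWint : Integrable W μ)
    (hind : CondIndepFun m hm B W μ) :
    μ[fun ω => B ω * W ω | m] =ᵐ[μ] fun ω => (μ[B | m]) ω * (μ[W | m]) ω := by
  set s : Set Ω := B ⁻¹' {1} with hsdef
  have hs : MeasurableSet s := hB (measurableSet_singleton 1)
  have hBind : B = s.indicator (fun _ => (1:ℝ)) := by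
    funext ω
    rcases hBbin ω with h | h
    · have : ω ∉ s := by simp [hsdef, Set.mem_preimage, h]
      simp [Set.indicator_of_notMem this, h]
    · have : ω ∈ s := by simp [hsdef, Set.mem_preimage, h]
      simp [Set.indicator_of_mem this, h]
  have hBW : (fun ω => B ω * W ω) = s.indicator W := by
    funext ω
    by_cases h : ω ∈ s
    · have : B ω = 1 := by rw [hBind]; simp [Set.indicator_of_mem h]
      simp [Set.indicator_of_mem h, this]
    · have : B ω = 0 := by rw [hBind]; simp [Set.indicator_of_notMem h]
      simp [Set.indicator_of_notMem h, this]
  have hindsets := (condIndepFun_iff m hm B W hB hW μ).mp hind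
  have hind' : ∀ u : Set ℝ, MeasurableSet u →
      (μ⟦s ∩ W ⁻¹' u | m⟧) =ᵐ[μ] μ⟦s | m⟧ * μ⟦W ⁻¹' u | m⟧ := by
    intro u hu
    exact hindsets s (W ⁻¹' u) ⟨{1}, measurableSet_singleton 1, rfl⟩ ⟨u, hu, rfl⟩
  have hcore := aux_core hm hs hW hWint hind'
  rw [hBW]
  refine hcore.trans ?_
  have : μ[B | m] = μ⟦s | m⟧ := by rw [hBind]
  rw [this]

/-- Transfer of conditional independence along a.e. equality in the second variable. -/
lemma aux_condIndep_ae [StandardBorelSpace Ω] (hm : m ≤ mΩ) {B W W' : Ω → ℝ}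
    (hind : CondIndepFun m hm B W μ) (hWW' : W =ᵐ[μ] W') :
    CondIndepFun m hm B W' μ := by
  refine Kernel.IndepFun.congr' hind
    (Filter.Eventually.of_forall fun a => Filter.EventuallyEq.refl _ _) ?_
  set N : Set Ω := toMeasurable μ {ω | W ω ≠ W' ω} with hNdef
  have hNmeas : MeasurableSet N := measurableSet_toMeasurable _ _
  have hμN : μ N = 0 := by
    rw [hNdef, measure_toMeasurable]
    exact hWW'
  have hcond0 : (μ⟦N | m⟧) =ᵐ[μ] fun _ => (0:ℝ) := by
    have h1 : N.indicator (fun _ => (1:ℝ)) =ᵐ[μ] fun _ => (0:ℝ) := by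
      refine (ae_iff.2 ?_)
      have : {ω | ¬ N.indicator (fun _ => (1:ℝ)) ω = 0} ⊆ N := by
        intro ω hω
        by_contra h
        exact hω (Set.indicator_of_notMem h _)
      exact measure_mono_null this hμN
    calc μ⟦N | m⟧ =ᵐ[μ] μ[(fun _ => (0:ℝ)) | m] := condExp_congr_ae h1
      _ = fun _ => (0:ℝ) := by rw [condExp_const hm]
  have htoReal : (fun ω => (condExpKernel μ m ω N).toReal) =ᵐ[μ] fun _ => (0:ℝ) :=
    (condExpKernel_ae_eq_condExp hm hNmeas).trans hcond0
  have htrim : (fun ω => (condExpKernel μ m ω N).toReal) =ᵐ[μ.trim hm] fun _ => (0:ℝ) := by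
    rw [StronglyMeasurable.ae_eq_trim_iff hm ?_ stronglyMeasurable_const]
    · exact htoReal
    · exact (@Measurable.ennreal_toReal Ω m _ (measurable_condExpKernel hNmeas)).stronglyMeasurable
  filter_upwards [htrim] with a ha
  have hfin : condExpKernel μ m a N ≠ ⊤ := measure_ne_top _ _
  have hzero : condExpKernel μ m a N = 0 := by
    rcases ENNReal.toReal_eq_zero_iff _ |>.mp ha with h | h
    · exact h
    · exact absurd h hfin
  have : condExpKernel μ m a {ω | W ω ≠ W' ω} = 0 :=
    measure_mono_null (subset_toMeasurable _ _) hzero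
  exact this

/-- The main exchange identity: replace a binary `B` by (a version of) its conditional
expectation `β` inside the integral, against `W ⬝ G` with `m`-measurable `G`. -/
lemma aux_stepB' [StandardBorelSpace Ω] (hm : m ≤ mΩ) {B W β G : Ω → ℝ}
    (hB : Measurable B) (hBbin : ∀ ω, B ω = 0 ∨ B ω = 1)
    (hW : Measurable W) (hWint : Integrable W μ)
    (hind : CondIndepFun m hm B W μ)
    (hβ : StronglyMeasurable[m] β) (hβae : μ[B | m] =ᵐ[μ] β) (hβbd : ∀ ω, |β ω| ≤ 1)
    (hG : StronglyMeasurable[m] G)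
    (hGBW : Integrable (fun ω => G ω * (B ω * W ω)) μ)
    (hGβW : Integrable (fun ω => (G ω * β ω) * W ω) μ) :
    ∫ ω, B ω * W ω * G ω ∂μ = ∫ ω, β ω * W ω * G ω ∂μ := by
  have hBW_int : Integrable (fun ω => B ω * W ω) μ := by
    refine hWint.bdd_mul (c := 1) hB.aestronglyMeasurable
      (Filter.Eventually.of_forall fun ω => ?_)
    rcases hBbin ω with h | h <;> simp [h]
  have hpull1 : μ[(fun ω => G ω * (B ω * W ω)) | m]
      =ᵐ[μ] fun ω => G ω * (μ[(fun ω => B ω * W ω) | m]) ω :=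
    condExp_mul_of_stronglyMeasurable_left hG hGBW hBW_int
  have hpull2 : μ[(fun ω => (G ω * β ω) * W ω) | m]
      =ᵐ[μ] fun ω => (G ω * β ω) * (μ[W | m]) ω :=
    condExp_mul_of_stronglyMeasurable_left (hG.mul hβ) hGβW hWint
  have hA := aux_stepA hm hB hBbin hW hWint hind
  calc ∫ ω, B ω * W ω * G ω ∂μ
      = ∫ ω, G ω * (B ω * W ω) ∂μ := integral_congr_ae
        (Filter.Eventually.of_forall fun ω => by ring)
    _ = ∫ ω, (μ[(fun ω => G ω * (B ω * W ω)) | m]) ω ∂μ := (integral_condExp hm).symm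
    _ = ∫ ω, G ω * (μ[(fun ω => B ω * W ω) | m]) ω ∂μ := integral_congr_ae hpull1
    _ = ∫ ω, (G ω * β ω) * (μ[W | m]) ω ∂μ := by
        refine integral_congr_ae ?_
        filter_upwards [hA, hβae] with ω h1 h2
        rw [h1, ← h2]; ring
    _ = ∫ ω, (μ[(fun ω => (G ω * β ω) * W ω) | m]) ω ∂μ := (integral_congr_ae hpull2).symm
    _ = ∫ ω, (G ω * β ω) * W ω ∂μ := integral_condExp hm
    _ = ∫ ω, β ω * W ω * G ω ∂μ := integral_congr_ae
        (Filter.Eventually.of_forall fun ω => by ring)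

/-- Bounded-`G` version. -/
lemma aux_stepB [StandardBorelSpace Ω] (hm : m ≤ mΩ) {B W β G : Ω → ℝ}
    (hB : Measurable B) (hBbin : ∀ ω, B ω = 0 ∨ B ω = 1)
    (hW : Measurable W) (hWint : Integrable W μ)
    (hind : CondIndepFun m hm B W μ)
    (hβ : StronglyMeasurable[m] β) (hβae : μ[B | m] =ᵐ[μ] β) (hβbd : ∀ ω, |β ω| ≤ 1)
    (hG : StronglyMeasurable[m] G) {c : ℝ} (hGbd : ∀ ω, |G ω| ≤ c) :
    ∫ ω, B ω * W ω * G ω ∂μ = ∫ ω, β ω * W ω * G ω ∂μ := by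
  refine aux_stepB' hm hB hBbin hW hWint hind hβ hβae hβbd hG ?_ ?_
  · refine (hWint.bdd_mul (f := fun ω => G ω * B ω) (c := max c 0) ?_ ?_).congr
      (Filter.Eventually.of_forall fun ω => by ring)
    · exact ((hG.mono hm).aestronglyMeasurable.mul hB.aestronglyMeasurable)
    · refine Filter.Eventually.of_forall fun ω => ?_
      rw [Real.norm_eq_abs, abs_mul]
      rcases hBbin ω with h | h
      · simp [h, le_max_right]
      · simp only [h, abs_one, mul_one]
        exact le_trans (hGbd ω) (le_max_left _ _)
  · refine hWint.bdd_mul (f := fun ω => G ω * β ω) (c := max c 0) ?_ ?_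
    · exact ((hG.mono hm).aestronglyMeasurable.mul ((hβ.mono hm).aestronglyMeasurable))
    · refine Filter.Eventually.of_forall fun ω => ?_
      rw [Real.norm_eq_abs, abs_mul]
      calc |G ω| * |β ω| ≤ c * 1 :=
            mul_le_mul (hGbd ω) (hβbd ω) (abs_nonneg _) (le_trans (abs_nonneg _) (hGbd ω))
        _ = c := mul_one c
        _ ≤ max c 0 := le_max_left _ _


/-- Integrability of `B ⬝ W ⬝ h` for unbounded `m`-measurable `h ≥ 0` with `β ⬝ h ≤ 1`,
where `β` is a version of `μ[B|m]`, via monotone convergence. -/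
lemma aux_integrable_unbdd [StandardBorelSpace Ω] (hm : m ≤ mΩ) {B W β h : Ω → ℝ}
    (hB : Measurable B) (hBbin : ∀ ω, B ω = 0 ∨ B ω = 1)
    (hW : Measurable W) (hWint : Integrable W μ)
    (hind : CondIndepFun m hm B W μ)
    (hβ : StronglyMeasurable[m] β) (hβae : μ[B | m] =ᵐ[μ] β)
    (hβ01 : ∀ ω, β ω ∈ Set.Icc (0:ℝ) 1)
    (hh : StronglyMeasurable[m] h) (hh0 : ∀ ω, 0 ≤ h ω) (hβh : ∀ ω, β ω * h ω ≤ 1) :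
    Integrable (fun ω => B ω * W ω * h ω) μ := by
  have hB0 : ∀ ω, 0 ≤ B ω := fun ω => by rcases hBbin ω with h' | h' <;> simp [h']
  have hB1 : ∀ ω, B ω ≤ 1 := fun ω => by rcases hBbin ω with h' | h' <;> simp [h']
  have hβbd : ∀ ω, |β ω| ≤ 1 := fun ω =>
    abs_le.mpr ⟨by linarith [(hβ01 ω).1], (hβ01 ω).2⟩
  set V : Ω → ℝ := fun ω => |W ω| with hVdef
  have hVmeas : Measurable V := hW.abs
  have hVint : Integrable V μ := hWint.abs
  have hV0 : ∀ ω, 0 ≤ V ω := fun ω => abs_nonneg _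
  have hindV : CondIndepFun m hm B V μ := hind.comp measurable_id measurable_abs
  have hhΩ : Measurable h := (hh.mono hm).measurable
  set G : ℕ → Ω → ℝ := fun n ω => min (h ω) n with hGdef
  have hGm : ∀ n, StronglyMeasurable[m] (G n) :=
    fun n => (hh.measurable.min measurable_const).stronglyMeasurable
  have hG0 : ∀ n ω, 0 ≤ G n ω := fun n ω => le_min (hh0 ω) (Nat.cast_nonneg n)
  have hGle : ∀ n ω, G n ω ≤ h ω := fun n ω => min_le_left _ _
  have hGbd : ∀ n ω, |G n ω| ≤ (n : ℝ) := fun n ω =>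
    abs_le.mpr ⟨le_trans (by norm_num [Nat.cast_nonneg]) (hG0 n ω), min_le_right _ _⟩
  -- per-n integrability
  have IBn : ∀ n, Integrable (fun ω => B ω * V ω * G n ω) μ := by
    intro n
    refine (hVint.bdd_mul (f := fun ω => B ω * G n ω) (c := (n:ℝ)) ?_ ?_).congr
      (Filter.Eventually.of_forall fun ω => by ring)
    · exact hB.aestronglyMeasurable.mul (((hGm n).mono hm).aestronglyMeasurable)
    · refine Filter.Eventually.of_forall fun ω => ?_
      rw [Real.norm_eq_abs, abs_mul]
      calc |B ω| * |G n ω| ≤ 1 * (n:ℝ) := by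
            refine mul_le_mul ?_ (hGbd n ω) (abs_nonneg _) zero_le_one
            rw [abs_of_nonneg (hB0 ω)]; exact hB1 ω
        _ = (n:ℝ) := one_mul _
  have Iβn : ∀ n, Integrable (fun ω => β ω * V ω * G n ω) μ := by
    intro n
    refine (hVint.bdd_mul (f := fun ω => β ω * G n ω) (c := (n:ℝ)) ?_ ?_).congr
      (Filter.Eventually.of_forall fun ω => by ring)
    · exact ((hβ.mono hm).aestronglyMeasurable).mul (((hGm n).mono hm).aestronglyMeasurable)
    · refine Filter.Eventually.of_forall fun ω => ?_
      rw [Real.norm_eq_abs, abs_mul]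
      calc |β ω| * |G n ω| ≤ 1 * (n:ℝ) :=
            mul_le_mul (hβbd ω) (hGbd n ω) (abs_nonneg _) zero_le_one
        _ = (n:ℝ) := one_mul _
  -- per-n exchange
  have En : ∀ n, ∫ ω, B ω * V ω * G n ω ∂μ = ∫ ω, β ω * V ω * G n ω ∂μ := fun n =>
    aux_stepB hm hB hBbin hVmeas hVint hindV hβ hβae hβbd (hGm n) (hGbd n)
  -- pass to the limit in ℝ≥0∞
  have hsup : ∀ ω, (⨆ n : ℕ, ENNReal.ofReal (B ω * V ω * G n ω))
      = ENNReal.ofReal (B ω * V ω * h ω) := by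
    intro ω
    refine le_antisymm (iSup_le fun n => ENNReal.ofReal_le_ofReal ?_) ?_
    · exact mul_le_mul_of_nonneg_left (hGle n ω) (mul_nonneg (hB0 ω) (hV0 ω))
    · have hmin : G ⌈h ω⌉₊ ω = h ω := min_eq_left (Nat.le_ceil _)
      have := le_iSup (fun n : ℕ => ENNReal.ofReal (B ω * V ω * G n ω)) ⌈h ω⌉₊
      rwa [hmin] at this
  have hmeasn : ∀ n : ℕ, Measurable (fun ω => ENNReal.ofReal (B ω * V ω * G n ω)) :=
    fun n => ((hB.mul hVmeas).mul (hhΩ.min measurable_const)).ennreal_ofReal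
  have hmono : Monotone (fun (n : ℕ) (ω : Ω) => ENNReal.ofReal (B ω * V ω * G n ω)) := by
    intro a b hab ω
    refine ENNReal.ofReal_le_ofReal ?_
    refine mul_le_mul_of_nonneg_left ?_ (mul_nonneg (hB0 ω) (hV0 ω))
    exact min_le_min le_rfl (Nat.cast_le.mpr hab)
  have hL : ∫⁻ ω, ENNReal.ofReal (B ω * V ω * h ω) ∂μ
      = ⨆ n, ∫⁻ ω, ENNReal.ofReal (B ω * V ω * G n ω) ∂μ := by
    rw [← lintegral_iSup hmeasn hmono]
    exact lintegral_congr fun ω => (hsup ω).symm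
  have hLn : ∀ n, ∫⁻ ω, ENNReal.ofReal (B ω * V ω * G n ω) ∂μ
      = ENNReal.ofReal (∫ ω, β ω * V ω * G n ω ∂μ) := by
    intro n
    rw [← ofReal_integral_eq_lintegral_ofReal (IBn n)
      (Filter.Eventually.of_forall fun ω =>
        mul_nonneg (mul_nonneg (hB0 ω) (hV0 ω)) (hG0 n ω)), En n]
  have hbound : ∀ n, ENNReal.ofReal (∫ ω, β ω * V ω * G n ω ∂μ)
      ≤ ENNReal.ofReal (∫ ω, V ω ∂μ) := by
    intro n
    refine ENNReal.ofReal_le_ofReal (integral_mono (Iβn n) hVint fun ω => ?_)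
    have h1 : β ω * G n ω ≤ 1 := by
      calc β ω * G n ω ≤ β ω * h ω :=
            mul_le_mul_of_nonneg_left (hGle n ω) (hβ01 ω).1
        _ ≤ 1 := hβh ω
    nlinarith [hV0 ω, (hβ01 ω).1, hG0 n ω]
  have hfin : ∫⁻ ω, ENNReal.ofReal (B ω * V ω * h ω) ∂μ < ⊤ := by
    rw [hL]
    refine lt_of_le_of_lt (iSup_le fun n => le_trans (le_of_eq (hLn n)) (hbound n)) ?_
    exact ENNReal.ofReal_lt_top
  refine ⟨((hB.mul hW).mul hhΩ).aestronglyMeasurable, ?_⟩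
  rw [hasFiniteIntegral_iff_norm]
  have : ∀ ω, ENNReal.ofReal ‖B ω * W ω * h ω‖ = ENNReal.ofReal (B ω * V ω * h ω) := by
    intro ω
    congr 1
    rw [Real.norm_eq_abs, abs_mul, abs_mul, abs_of_nonneg (hB0 ω), abs_of_nonneg (hh0 ω)]
  rw [lintegral_congr this]
  exact hfin

/-- Unbounded-weight exchange. -/
lemma aux_stepC [StandardBorelSpace Ω] (hm : m ≤ mΩ) {B W β h : Ω → ℝ}
    (hB : Measurable B) (hBbin : ∀ ω, B ω = 0 ∨ B ω = 1)
    (hW : Measurable W) (hWint : Integrable W μ)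
    (hind : CondIndepFun m hm B W μ)
    (hβ : StronglyMeasurable[m] β) (hβae : μ[B | m] =ᵐ[μ] β)
    (hβ01 : ∀ ω, β ω ∈ Set.Icc (0:ℝ) 1)
    (hh : StronglyMeasurable[m] h) (hh0 : ∀ ω, 0 ≤ h ω) (hβh : ∀ ω, β ω * h ω ≤ 1) :
    ∫ ω, B ω * W ω * h ω ∂μ = ∫ ω, β ω * W ω * h ω ∂μ := by
  have hβbd : ∀ ω, |β ω| ≤ 1 := fun ω =>
    abs_le.mpr ⟨by linarith [(hβ01 ω).1], (hβ01 ω).2⟩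
  refine aux_stepB' hm hB hBbin hW hWint hind hβ hβae hβbd hh ?_ ?_
  · exact (aux_integrable_unbdd hm hB hBbin hW hWint hind hβ hβae hβ01 hh hh0 hβh).congr
      (Filter.Eventually.of_forall fun ω => by ring)
  · refine hWint.bdd_mul (f := fun ω => h ω * β ω) (c := 1) ?_ ?_
    · exact ((hh.mono hm).aestronglyMeasurable).mul ((hβ.mono hm).aestronglyMeasurable)
    · refine Filter.Eventually.of_forall fun ω => ?_
      rw [Real.norm_eq_abs, abs_of_nonneg (mul_nonneg (hh0 ω) (hβ01 ω).1), mul_comm]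
      exact hβh ω

end Aux

/-- Identification (IPW-IPS formula): under consistency and unconfoundedness, the value of the
incremental propensity score policy `d(X) = δ(X)π(X)/(δ(X)π(X)+1-π(X))` equals the
inverse-probability-weighting expression `E[Y(δ(X)A + 1 - A) / (δ(X)π(X) + 1 - π(X))]`. -/
theorem identification_IPW_IPS
    {Ω : Type*} (m : MeasurableSpace Ω) {mΩ : MeasurableSpace Ω} [StandardBorelSpace Ω]
    (μ : Measure Ω) [IsProbabilityMeasure μ]
    (hm : m ≤ mΩ)
    (A Y Y0 Y1 δ π : Ω → ℝ)
    (hAmeas : Measurable A) (hAbin : ∀ ω, A ω = 0 ∨ A ω = 1)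
    (hY0 : Integrable Y0 μ) (hY1 : Integrable Y1 μ)
    -- consistency: Y = Y(A)
    (hcons : ∀ ω, Y ω = A ω * Y1 ω + (1 - A ω) * Y0 ω)
    -- unconfoundedness: A ⟂ Y(a) | X for a = 0, 1
    (hunconf0 : CondIndepFun m hm A Y0 μ)
    (hunconf1 : CondIndepFun m hm A Y1 μ)
    -- δ(X) > 0, bounded, function of X
    (hδmeas : StronglyMeasurable[m] δ) (hδpos : ∀ ω, 0 < δ ω)
    (hδbd : ∃ C, ∀ ω, δ ω ≤ C)
    -- π(X) = P(A = 1 | X)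
    (hπmeas : StronglyMeasurable[m] π) (hπ01 : ∀ ω, π ω ∈ Set.Icc (0:ℝ) 1)
    (hπ : π =ᵐ[μ] μ[A | m]) :
    ∫ ω, (Y1 ω * (δ ω * π ω / (δ ω * π ω + 1 - π ω))
        + Y0 ω * (1 - δ ω * π ω / (δ ω * π ω + 1 - π ω))) ∂μ
      = ∫ ω, Y ω * (δ ω * A ω + 1 - A ω) / (δ ω * π ω + 1 - π ω) ∂μ := by
  obtain ⟨C, hC⟩ := hδbd
  -- positivity of the denominator
  have hden_pos : ∀ ω, 0 < δ ω * π ω + 1 - π ω := by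
    intro ω
    rcases lt_or_eq_of_le (hπ01 ω).2 with hlt | heq
    · nlinarith [mul_nonneg (hδpos ω).le (hπ01 ω).1]
    · have : δ ω * π ω + 1 - π ω = δ ω := by rw [heq]; ring
      rw [this]; exact hδpos ω
  -- measurable versions of the potential outcomes
  set Y0' : Ω → ℝ := hY0.1.mk Y0 with hY0'def
  set Y1' : Ω → ℝ := hY1.1.mk Y1 with hY1'def
  have hY0'ae : Y0 =ᵐ[μ] Y0' := hY0.1.ae_eq_mk
  have hY1'ae : Y1 =ᵐ[μ] Y1' := hY1.1.ae_eq_mk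
  have hY0'meas : Measurable[mΩ] Y0' := hY0.1.stronglyMeasurable_mk.measurable
  have hY1'meas : Measurable[mΩ] Y1' := hY1.1.stronglyMeasurable_mk.measurable
  have hY0'int : Integrable Y0' μ := hY0.congr hY0'ae
  have hY1'int : Integrable Y1' μ := hY1.congr hY1'ae
  have hAΩ : Measurable[mΩ] A := hAmeas
  have hA0 : ∀ ω, 0 ≤ A ω := fun ω => by rcases hAbin ω with h | h <;> simp [h]
  have hAint : Integrable A μ :=
    ⟨hAΩ.aestronglyMeasurable, HasFiniteIntegral.of_bounded (C := 1)
      (Filter.Eventually.of_forall fun ω => by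
        rcases hAbin ω with h | h <;> simp [h])⟩
  -- B₂ = 1 - A
  set B₂ : Ω → ℝ := fun ω => 1 - A ω with hB₂def
  have hB₂meas : Measurable[mΩ] B₂ := measurable_const.sub hAΩ
  have hB₂bin : ∀ ω, B₂ ω = 0 ∨ B₂ ω = 1 := fun ω => by
    rcases hAbin ω with h | h <;> simp [hB₂def, h]
  have hβ₂ : ∀ ω, (1:ℝ) - π ω ∈ Set.Icc (0:ℝ) 1 :=
    fun ω => ⟨by linarith [(hπ01 ω).2], by linarith [(hπ01 ω).1]⟩
  have hβ₂meas : StronglyMeasurable[m] (fun ω => 1 - π ω) :=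
    (measurable_const.sub hπmeas.measurable).stronglyMeasurable
  have hβ₂ae : μ[B₂ | m] =ᵐ[μ] fun ω => 1 - π ω := by
    have hsub : μ[B₂ | m] =ᵐ[μ] μ[(fun _ => (1:ℝ)) | m] - μ[A | m] :=
      condExp_sub (integrable_const 1) hAint m
    rw [condExp_const hm] at hsub
    filter_upwards [hsub, hπ] with ω h1 h2
    simp only [Pi.sub_apply] at h1
    rw [h1, ← h2]
  -- conditional independence for the measurable versions
  have hindY1 : CondIndepFun m hm A Y1' μ := aux_condIndep_ae hm hunconf1 hY1'ae
  have hindY0 : CondIndepFun m hm A Y0' μ := aux_condIndep_ae hm hunconf0 hY0'ae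
  have hindB₂Y0 : CondIndepFun m hm B₂ Y0' μ :=
    hindY0.comp (measurable_const.sub measurable_id) measurable_id
  -- the weights
  have hdenm : Measurable[m] (fun ω => δ ω * π ω + 1 - π ω) :=
    ((hδmeas.measurable.mul hπmeas.measurable).add_const 1).sub hπmeas.measurable
  set g : Ω → ℝ := fun ω => δ ω / (δ ω * π ω + 1 - π ω) with hgdef
  set hf : Ω → ℝ := fun ω => 1 / (δ ω * π ω + 1 - π ω) with hfdef
  have hgmeas : StronglyMeasurable[m] g := (hδmeas.measurable.div hdenm).stronglyMeasurable
  have hfmeas : StronglyMeasurable[m] hf := (measurable_const.div hdenm).stronglyMeasurable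
  have hf0 : ∀ ω, 0 ≤ hf ω := fun ω => by
    have := hden_pos ω
    positivity
  have hβ₂hf : ∀ ω, (1 - π ω) * hf ω ≤ 1 := by
    intro ω
    rw [hfdef]
    rw [mul_one_div, div_le_one (hden_pos ω)]
    nlinarith [mul_nonneg (hδpos ω).le (hπ01 ω).1]
  have hgbd : ∀ ω, |g ω| ≤ max 1 C := by
    intro ω
    have hd := hden_pos ω
    have hg0 : 0 ≤ g ω := div_nonneg (hδpos ω).le hd.le
    rw [abs_of_nonneg hg0]
    rcases le_total (δ ω) 1 with hle | hge
    · have h1 : δ ω ≤ δ ω * π ω + 1 - π ω := by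
        nlinarith [mul_nonneg (sub_nonneg.mpr (hπ01 ω).2) (sub_nonneg.mpr hle)]
      exact le_trans ((div_le_one hd).mpr h1) (le_max_left _ _)
    · have h1 : (1:ℝ) ≤ δ ω * π ω + 1 - π ω := by
        nlinarith [mul_nonneg (hδpos ω).le (hπ01 ω).1,
          mul_le_mul_of_nonneg_left hge (mul_nonneg (hδpos ω).le (hπ01 ω).1)]
      have h2 : g ω ≤ δ ω := by
        rw [hgdef]
        rw [div_le_iff₀ hd]
        nlinarith [mul_le_mul_of_nonneg_left h1 (hδpos ω).le]
      exact le_trans (h2.trans (hC ω)) (le_max_right _ _)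
  have hπbd : ∀ ω, |π ω| ≤ 1 := fun ω =>
    abs_le.mpr ⟨by linarith [(hπ01 ω).1], (hπ01 ω).2⟩
  -- the two exchange identities
  have T1 : ∫ ω, A ω * Y1' ω * g ω ∂μ = ∫ ω, π ω * Y1' ω * g ω ∂μ :=
    aux_stepB hm hAΩ hAbin hY1'meas hY1'int hindY1 hπmeas hπ.symm hπbd hgmeas hgbd
  have T2 : ∫ ω, B₂ ω * Y0' ω * hf ω ∂μ = ∫ ω, (1 - π ω) * Y0' ω * hf ω ∂μ :=
    aux_stepC hm hB₂meas hB₂bin hY0'meas hY0'int hindB₂Y0 hβ₂meas hβ₂ae hβ₂ hfmeas hf0 hβ₂hf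
  -- integrability of each of the four pieces
  have IR1 : Integrable (fun ω => A ω * Y1' ω * g ω) μ := by
    refine (hY1'int.bdd_mul (f := fun ω => A ω * g ω) (c := max 1 C) ?_ ?_).congr
      (Filter.Eventually.of_forall fun ω => by ring)
    · exact hAΩ.aestronglyMeasurable.mul ((hgmeas.mono hm).aestronglyMeasurable)
    · refine Filter.Eventually.of_forall fun ω => ?_
      rw [Real.norm_eq_abs, abs_mul]
      rcases hAbin ω with h | h
      · simp only [h, abs_zero, zero_mul]
        positivity
      · simp only [h, abs_one, one_mul]
        exact hgbd ω
  have IL1 : Integrable (fun ω => π ω * Y1' ω * g ω) μ := by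
    refine (hY1'int.bdd_mul (f := fun ω => π ω * g ω) (c := max 1 C) ?_ ?_).congr
      (Filter.Eventually.of_forall fun ω => by ring)
    · exact ((hπmeas.mono hm).aestronglyMeasurable).mul
        ((hgmeas.mono hm).aestronglyMeasurable)
    · refine Filter.Eventually.of_forall fun ω => ?_
      rw [Real.norm_eq_abs, abs_mul]
      calc |π ω| * |g ω| ≤ 1 * max 1 C :=
            mul_le_mul (hπbd ω) (hgbd ω) (abs_nonneg _) zero_le_one
        _ = max 1 C := one_mul _
  have IR2 : Integrable (fun ω => B₂ ω * Y0' ω * hf ω) μ :=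
    aux_integrable_unbdd hm hB₂meas hB₂bin hY0'meas hY0'int hindB₂Y0 hβ₂meas hβ₂ae hβ₂
      hfmeas hf0 hβ₂hf
  have IL2 : Integrable (fun ω => (1 - π ω) * Y0' ω * hf ω) μ := by
    refine (hY0'int.bdd_mul (f := fun ω => (1 - π ω) * hf ω) (c := 1) ?_ ?_).congr
      (Filter.Eventually.of_forall fun ω => by ring)
    · exact ((hβ₂meas.mono hm).aestronglyMeasurable).mul
        ((hfmeas.mono hm).aestronglyMeasurable)
    · refine Filter.Eventually.of_forall fun ω => ?_
      rw [Real.norm_eq_abs, abs_of_nonneg (mul_nonneg (hβ₂ ω).1 (hf0 ω))]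
      exact hβ₂hf ω
  -- rewrite both sides
  have hLHS : ∫ ω, (Y1 ω * (δ ω * π ω / (δ ω * π ω + 1 - π ω))
      + Y0 ω * (1 - δ ω * π ω / (δ ω * π ω + 1 - π ω))) ∂μ
      = ∫ ω, (π ω * Y1' ω * g ω + (1 - π ω) * Y0' ω * hf ω) ∂μ := by
    refine integral_congr_ae ?_
    filter_upwards [hY0'ae, hY1'ae] with ω e0 e1
    rw [e0, e1]
    have hd := (hden_pos ω).ne'
    simp only [hgdef, hfdef]
    field_simp
    ring
  have hRHS : ∫ ω, Y ω * (δ ω * A ω + 1 - A ω) / (δ ω * π ω + 1 - π ω) ∂μ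
      = ∫ ω, (A ω * Y1' ω * g ω + B₂ ω * Y0' ω * hf ω) ∂μ := by
    refine integral_congr_ae ?_
    filter_upwards [hY0'ae, hY1'ae] with ω e0 e1
    simp only [hgdef, hfdef, hB₂def]
    rcases hAbin ω with h | h
    · rw [hcons ω, h, e0]; ring
    · rw [hcons ω, h, e1]; ring
  rw [hLHS, hRHS, integral_add IL1 IL2, integral_add IR1 IR2, T1, T2]
end

section
/- The uncentered efficient influence function ξ(P)(O) = [Aδ(X)(Y-μ₁(X)) + (1-A)(Y-μ₀(X)) + δ(X)π(X)μ₁(X) + (1-π(X))μ₀(X)]/(δ(X)π(X)+1-π(X)) + δ(X)τ(X)(A-π(X))/(δ(X)π(X)+1-π(X))², with τ = μ₁ - μ₀, has expectation equal to the value function: E[ξ(P)(O)] = E[(δ(X)π(X)μ₁(X) + (1-π(X))μ₀(X))/(δ(X)π(X)+1-π(X))]. -/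
open MeasureTheory ProbabilityTheory

/-- The uncentered efficient influence function
`ξ(P)(O) = [Aδ(X)(Y-μ₁(X)) + (1-A)(Y-μ₀(X)) + δ(X)π(X)μ₁(X) + (1-π(X))μ₀(X)]/(δ(X)π(X)+1-π(X))
          + δ(X)τ(X)(A-π(X))/(δ(X)π(X)+1-π(X))²`, with `τ = μ₁ - μ₀`,
has expectation equal to the value function
`E[(δ(X)π(X)μ₁(X) + (1-π(X))μ₀(X))/(δ(X)π(X)+1-π(X))]`. -/
theorem uncentered_EIF_mean
    {Ω : Type*} (m : MeasurableSpace Ω) {mΩ : MeasurableSpace Ω}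
    (μ : Measure Ω) [IsProbabilityMeasure μ]
    (hm : m ≤ mΩ)
    (A Y δ π μ0f μ1f : Ω → ℝ)
    (hAmeas : Measurable A) (hAbin : ∀ ω, A ω = 0 ∨ A ω = 1)
    (hYmeas : Measurable Y) (hYint : Integrable Y μ)
    (hδmeas : StronglyMeasurable[m] δ) (hδpos : ∀ ω, 0 < δ ω)
    (hδbd : ∃ C, ∀ ω, δ ω ≤ C)
    (hπmeas : StronglyMeasurable[m] π) (hπ01 : ∀ ω, π ω ∈ Set.Icc (0:ℝ) 1)
    (hπ : π =ᵐ[μ] μ[A | m])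
    (hμ1meas : StronglyMeasurable[m] μ1f) (hμ0meas : StronglyMeasurable[m] μ0f)
    (hμ1int : Integrable μ1f μ) (hμ0int : Integrable μ0f μ)
    (hμ1 : (fun ω => π ω * μ1f ω) =ᵐ[μ] μ[fun ω => A ω * Y ω | m])
    (hμ0 : (fun ω => (1 - π ω) * μ0f ω) =ᵐ[μ] μ[fun ω => (1 - A ω) * Y ω | m])
    (ξ : Ω → ℝ)
    (hξ : ∀ ω, ξ ω =
      (A ω * δ ω * (Y ω - μ1f ω) + (1 - A ω) * (Y ω - μ0f ω)
        + δ ω * π ω * μ1f ω + (1 - π ω) * μ0f ω) / (δ ω * π ω + 1 - π ω)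
      + δ ω * (μ1f ω - μ0f ω) * (A ω - π ω) / (δ ω * π ω + 1 - π ω) ^ 2)
    (hξint : Integrable ξ μ) :
    ∫ ω, ξ ω ∂μ
      = ∫ ω, (δ ω * π ω * μ1f ω + (1 - π ω) * μ0f ω) / (δ ω * π ω + 1 - π ω) ∂μ := by
  classical
  obtain ⟨C, hC⟩ := hδbd
  -- positivity of the denominator
  have hDpos : ∀ ω, 0 < δ ω * π ω + 1 - π ω := by
    intro ω
    obtain ⟨h1, h2⟩ := hπ01 ω
    nlinarith [hδpos ω, mul_nonneg (le_of_lt (hδpos ω)) h1]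
  have hDne : ∀ ω, δ ω * π ω + 1 - π ω ≠ 0 := fun ω => (hDpos ω).ne'
  have hAabs : ∀ ω, |A ω| ≤ 1 := by
    intro ω; rcases hAbin ω with h | h <;> rw [h] <;> norm_num
  have h1Aabs : ∀ ω, |1 - A ω| ≤ 1 := by
    intro ω; rcases hAbin ω with h | h <;> rw [h] <;> norm_num
  -- bounds on the weight functions
  have hM : (0:ℝ) ≤ max C 1 := le_trans zero_le_one (le_max_right _ _)
  have hdpi : ∀ ω, |δ ω * π ω / (δ ω * π ω + 1 - π ω)| ≤ 1 := by
    intro ω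
    obtain ⟨h1, h2⟩ := hπ01 ω
    rw [abs_of_nonneg (div_nonneg (mul_nonneg (hδpos ω).le h1) (hDpos ω).le)]
    rw [div_le_one (hDpos ω)]; nlinarith
  have h1pi : ∀ ω, |(1 - π ω) / (δ ω * π ω + 1 - π ω)| ≤ 1 := by
    intro ω
    obtain ⟨h1, h2⟩ := hπ01 ω
    rw [abs_of_nonneg (div_nonneg (by linarith) (hDpos ω).le)]
    rw [div_le_one (hDpos ω)]
    nlinarith [mul_nonneg (hδpos ω).le h1]
  have hFb : ∀ ω, |δ ω / (δ ω * π ω + 1 - π ω)| ≤ max C 1 := by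
    intro ω
    obtain ⟨h1, h2⟩ := hπ01 ω
    have hd := hδpos ω
    have hD := hDpos ω
    rw [abs_of_nonneg (div_nonneg hd.le hD.le), div_le_iff₀ hD]
    rcases le_total (δ ω) 1 with h | h
    · have h1' : (1:ℝ) ≤ max C 1 := le_max_right _ _
      nlinarith [mul_nonneg (sub_nonneg.mpr h) (sub_nonneg.mpr h2),
        mul_nonneg (sub_nonneg.mpr h1') hD.le]
    · have hCd : δ ω ≤ C := hC ω
      have hD1 : (1:ℝ) ≤ δ ω * π ω + 1 - π ω := by nlinarith
      have hCM : C ≤ max C 1 := le_max_left _ _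
      nlinarith [mul_nonneg hM (sub_nonneg.mpr hD1)]
  -- measurability (ambient)
  have hAM : Measurable[mΩ] A := hAmeas
  have hδM : Measurable[mΩ] δ := (hδmeas.mono hm).measurable
  have hπM : Measurable[mΩ] π := (hπmeas.mono hm).measurable
  have hμ0M : Measurable[mΩ] μ0f := (hμ0meas.mono hm).measurable
  have hμ1M : Measurable[mΩ] μ1f := (hμ1meas.mono hm).measurable
  have hDM : Measurable[mΩ] (fun ω => δ ω * π ω + 1 - π ω) :=
    ((hδM.mul hπM).add measurable_const).sub hπM
  -- measurability (sub-σ-algebra)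
  have hδm' : Measurable[m] δ := hδmeas.measurable
  have hπm' : Measurable[m] π := hπmeas.measurable
  have hμ0m' : Measurable[m] μ0f := hμ0meas.measurable
  have hμ1m' : Measurable[m] μ1f := hμ1meas.measurable
  have hDm' : Measurable[m] (fun ω => δ ω * π ω + 1 - π ω) :=
    ((hδm'.mul hπm').add measurable_const).sub hπm'
  have hFm : StronglyMeasurable[m] (fun ω => δ ω / (δ ω * π ω + 1 - π ω)) :=
    (hδm'.div hDm').stronglyMeasurable
  have hFam : StronglyMeasurable[m]
      (fun ω => δ ω * (μ1f ω - μ0f ω) * (1 - π ω) / (δ ω * π ω + 1 - π ω) ^ 2) :=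
    (((hδm'.mul (hμ1m'.sub hμ0m')).mul (measurable_const.sub hπm')).div
      (hDm'.pow_const 2)).stronglyMeasurable
  have hFim : StronglyMeasurable[m] (fun ω => 1 / (δ ω * π ω + 1 - π ω)) :=
    (measurable_const.div hDm').stronglyMeasurable
  have hhm : StronglyMeasurable[m]
      (fun ω => δ ω * (μ1f ω - μ0f ω) * π ω / (δ ω * π ω + 1 - π ω)) :=
    (((hδm'.mul (hμ1m'.sub hμ0m')).mul hπm').div hDm').stronglyMeasurable
  -- integrability helper
  have hIbd : ∀ (f g : Ω → ℝ), Integrable f μ → AEStronglyMeasurable[mΩ] g μ → ∀ c : ℝ,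
      (∀ ω, |g ω| ≤ c) → Integrable (fun ω => g ω * f ω) μ := by
    intro f g hf hg c hc
    exact hf.bdd_mul hg (c := c) (ae_of_all _ fun ω => by simpa [Real.norm_eq_abs] using hc ω)
  have hτint : Integrable (fun ω => μ1f ω - μ0f ω) μ := hμ1int.sub hμ0int
  have hA_int : Integrable A μ :=
    (integrable_const (1:ℝ)).mono' hAM.aestronglyMeasurable
      (ae_of_all _ fun ω => by simpa [Real.norm_eq_abs] using hAabs ω)
  have h1Am : AEStronglyMeasurable[mΩ] (fun ω => 1 - A ω) μ :=
    (measurable_const.sub hAM).aestronglyMeasurable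
  have I_1A : Integrable (fun ω => 1 - A ω) μ :=
    (integrable_const (1:ℝ)).mono' h1Am
      (ae_of_all _ fun ω => by simpa [Real.norm_eq_abs] using h1Aabs ω)
  have I_AY : Integrable (fun ω => A ω * Y ω) μ :=
    hIbd Y A hYint hAM.aestronglyMeasurable 1 hAabs
  have I_μ1A : Integrable (fun ω => μ1f ω * A ω) μ :=
    (hIbd μ1f A hμ1int hAM.aestronglyMeasurable 1 hAabs).congr
      (ae_of_all _ fun ω => mul_comm _ _)
  have I_1AY : Integrable (fun ω => (1 - A ω) * Y ω) μ :=
    hIbd Y _ hYint h1Am 1 h1Aabs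
  have I_μ01A : Integrable (fun ω => μ0f ω * (1 - A ω)) μ :=
    (hIbd μ0f _ hμ0int h1Am 1 h1Aabs).congr (ae_of_all _ fun ω => mul_comm _ _)
  have I_hh1A : Integrable
      (fun ω => δ ω * (μ1f ω - μ0f ω) * π ω / (δ ω * π ω + 1 - π ω) * (1 - A ω)) μ := by
    have hb : ∀ ω, |δ ω * π ω / (δ ω * π ω + 1 - π ω) * (1 - A ω)| ≤ 1 := by
      intro ω
      rw [abs_mul]
      exact mul_le_one₀ (hdpi ω) (abs_nonneg _) (h1Aabs ω)
    have hmeas : AEStronglyMeasurable[mΩ]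
        (fun ω => δ ω * π ω / (δ ω * π ω + 1 - π ω) * (1 - A ω)) μ :=
      (((hδM.mul hπM).div hDM).mul (measurable_const.sub hAM)).aestronglyMeasurable
    exact (hIbd _ _ hτint hmeas 1 hb).congr (ae_of_all _ fun ω => by ring)
  have I_G : Integrable (fun ω => A ω * Y ω - μ1f ω * A ω) μ := I_AY.sub I_μ1A
  have I_FG : Integrable
      (fun ω => δ ω / (δ ω * π ω + 1 - π ω) * (A ω * Y ω - μ1f ω * A ω)) μ :=
    hIbd _ _ I_G (hδM.div hDM).aestronglyMeasurable (max C 1) hFb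
  have I_FaA : Integrable
      (fun ω => δ ω * (μ1f ω - μ0f ω) * (1 - π ω) / (δ ω * π ω + 1 - π ω) ^ 2 * A ω) μ := by
    have hb : ∀ ω, |δ ω / (δ ω * π ω + 1 - π ω) * ((1 - π ω) / (δ ω * π ω + 1 - π ω))
        * A ω| ≤ max C 1 := by
      intro ω
      rw [abs_mul, abs_mul]
      calc |δ ω / (δ ω * π ω + 1 - π ω)| * |(1 - π ω) / (δ ω * π ω + 1 - π ω)| * |A ω|
          ≤ max C 1 * 1 * 1 := by
            refine mul_le_mul (mul_le_mul (hFb ω) (h1pi ω) (abs_nonneg _) hM)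
              (hAabs ω) (abs_nonneg _) (by positivity)
        _ = max C 1 := by ring
    have hmeas : AEStronglyMeasurable[mΩ]
        (fun ω => δ ω / (δ ω * π ω + 1 - π ω) * ((1 - π ω) / (δ ω * π ω + 1 - π ω))
          * A ω) μ :=
      (((hδM.div hDM).mul ((measurable_const.sub hπM).div hDM)).mul
        hAM).aestronglyMeasurable
    refine (hIbd _ _ hτint hmeas (max C 1) hb).congr (ae_of_all _ fun ω => ?_)
    have hD := hDne ω
    field_simp
  have I_g' : Integrable (fun ω => (1 - A ω) * Y ω - μ0f ω * (1 - A ω)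
      - δ ω * (μ1f ω - μ0f ω) * π ω / (δ ω * π ω + 1 - π ω) * (1 - A ω)) μ :=
    (I_1AY.sub I_μ01A).sub I_hh1A
  have I_v1 : Integrable (fun ω => δ ω * π ω / (δ ω * π ω + 1 - π ω) * μ1f ω) μ :=
    hIbd _ _ hμ1int ((hδM.mul hπM).div hDM).aestronglyMeasurable 1 hdpi
  have I_v0 : Integrable (fun ω => (1 - π ω) / (δ ω * π ω + 1 - π ω) * μ0f ω) μ :=
    hIbd _ _ hμ0int ((measurable_const.sub hπM).div hDM).aestronglyMeasurable 1 h1pi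
  have I_v : Integrable
      (fun ω => (δ ω * π ω * μ1f ω + (1 - π ω) * μ0f ω) / (δ ω * π ω + 1 - π ω)) μ :=
    (I_v1.add I_v0).congr (ae_of_all _ fun ω => by
      simp only [Pi.add_apply]
      have hD := hDne ω
      field_simp)
  -- pointwise decomposition
  have hdecomp : ∀ ω, ξ ω
      - (δ ω * π ω * μ1f ω + (1 - π ω) * μ0f ω) / (δ ω * π ω + 1 - π ω)
      = δ ω / (δ ω * π ω + 1 - π ω) * (A ω * Y ω - μ1f ω * A ω)
        + (δ ω * (μ1f ω - μ0f ω) * (1 - π ω) / (δ ω * π ω + 1 - π ω) ^ 2 * A ω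
          + 1 / (δ ω * π ω + 1 - π ω) *
            ((1 - A ω) * Y ω - μ0f ω * (1 - A ω)
              - δ ω * (μ1f ω - μ0f ω) * π ω / (δ ω * π ω + 1 - π ω) * (1 - A ω))) := by
    intro ω
    have hD := hDne ω
    rw [hξ ω]
    rcases hAbin ω with h | h <;> rw [h] <;> field_simp <;> ring
  have I_Fig' : Integrable (fun ω => 1 / (δ ω * π ω + 1 - π ω) *
      ((1 - A ω) * Y ω - μ0f ω * (1 - A ω)
        - δ ω * (μ1f ω - μ0f ω) * π ω / (δ ω * π ω + 1 - π ω) * (1 - A ω))) μ := by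
    refine (((hξint.sub I_v).sub I_FG).sub I_FaA).congr (ae_of_all _ fun ω => ?_)
    have h := hdecomp ω
    simp only [Pi.sub_apply]
    linarith
  -- conditional expectation computations
  have hcA : μ[A|m] =ᵐ[μ] π := hπ.symm
  have e1A : μ[fun ω => 1 - A ω|m] =ᵐ[μ] fun ω => 1 - π ω := by
    have h1 : μ[fun ω => 1 - A ω|m] =ᵐ[μ]
        fun ω => (μ[fun _ : Ω => (1:ℝ)|m]) ω - (μ[A|m]) ω :=
      condExp_sub (f := fun _ : Ω => (1:ℝ)) (g := A) (integrable_const 1) hA_int m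
    filter_upwards [h1, hcA] with ω h1 h2
    rw [h1, condExp_const hm, h2]
  have eG : μ[fun ω => A ω * Y ω - μ1f ω * A ω|m] =ᵐ[μ] fun _ => (0:ℝ) := by
    have h1 : μ[fun ω => A ω * Y ω - μ1f ω * A ω|m] =ᵐ[μ]
        fun ω => (μ[fun ω => A ω * Y ω|m]) ω - (μ[fun ω => μ1f ω * A ω|m]) ω :=
      condExp_sub (f := fun ω => A ω * Y ω) (g := fun ω => μ1f ω * A ω) I_AY I_μ1A m
    have h2 : μ[fun ω => μ1f ω * A ω|m] =ᵐ[μ] fun ω => μ1f ω * (μ[A|m]) ω :=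
      condExp_mul_of_stronglyMeasurable_left hμ1meas I_μ1A hA_int
    filter_upwards [h1, h2, hμ1, hcA] with ω h1 h2 h3 h4
    simp only [h1, h2, h4]
    rw [← h3]
    ring
  have eg' : μ[fun ω => (1 - A ω) * Y ω - μ0f ω * (1 - A ω)
      - δ ω * (μ1f ω - μ0f ω) * π ω / (δ ω * π ω + 1 - π ω) * (1 - A ω)|m] =ᵐ[μ]
      fun ω => -(δ ω * (μ1f ω - μ0f ω) * π ω / (δ ω * π ω + 1 - π ω) * (1 - π ω)) := by
    have h1 : μ[fun ω => (1 - A ω) * Y ω - μ0f ω * (1 - A ω)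
        - δ ω * (μ1f ω - μ0f ω) * π ω / (δ ω * π ω + 1 - π ω) * (1 - A ω)|m] =ᵐ[μ]
        fun ω => (μ[fun ω => (1 - A ω) * Y ω - μ0f ω * (1 - A ω)|m]) ω
          - (μ[fun ω => δ ω * (μ1f ω - μ0f ω) * π ω / (δ ω * π ω + 1 - π ω)
              * (1 - A ω)|m]) ω :=
      condExp_sub (f := fun ω => (1 - A ω) * Y ω - μ0f ω * (1 - A ω))
        (g := fun ω => δ ω * (μ1f ω - μ0f ω) * π ω / (δ ω * π ω + 1 - π ω) * (1 - A ω))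
        (I_1AY.sub I_μ01A) I_hh1A m
    have h2 : μ[fun ω => (1 - A ω) * Y ω - μ0f ω * (1 - A ω)|m] =ᵐ[μ]
        fun ω => (μ[fun ω => (1 - A ω) * Y ω|m]) ω - (μ[fun ω => μ0f ω * (1 - A ω)|m]) ω :=
      condExp_sub (f := fun ω => (1 - A ω) * Y ω) (g := fun ω => μ0f ω * (1 - A ω))
        I_1AY I_μ01A m
    have h3 : μ[fun ω => μ0f ω * (1 - A ω)|m] =ᵐ[μ]
        fun ω => μ0f ω * (μ[fun ω => 1 - A ω|m]) ω :=
      condExp_mul_of_stronglyMeasurable_left hμ0meas I_μ01A I_1A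
    have h4 : μ[fun ω => δ ω * (μ1f ω - μ0f ω) * π ω / (δ ω * π ω + 1 - π ω)
        * (1 - A ω)|m] =ᵐ[μ]
        fun ω => δ ω * (μ1f ω - μ0f ω) * π ω / (δ ω * π ω + 1 - π ω)
          * (μ[fun ω => 1 - A ω|m]) ω :=
      condExp_mul_of_stronglyMeasurable_left hhm I_hh1A I_1A
    filter_upwards [h1, h2, h3, h4, hμ0, e1A] with ω h1 h2 h3 h4 h5 h6
    simp only [h1, h2, h3, h4, h6]
    rw [← h5]
    ring
  have eFG : μ[fun ω => δ ω / (δ ω * π ω + 1 - π ω) * (A ω * Y ω - μ1f ω * A ω)|m]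
      =ᵐ[μ] fun _ => (0:ℝ) := by
    have h1 : μ[fun ω => δ ω / (δ ω * π ω + 1 - π ω) * (A ω * Y ω - μ1f ω * A ω)|m]
        =ᵐ[μ] fun ω => δ ω / (δ ω * π ω + 1 - π ω)
          * (μ[fun ω => A ω * Y ω - μ1f ω * A ω|m]) ω :=
      condExp_mul_of_stronglyMeasurable_left hFm I_FG I_G
    filter_upwards [h1, eG] with ω h1 h2
    simp only [h1, h2, mul_zero]
  have eFaA : μ[fun ω => δ ω * (μ1f ω - μ0f ω) * (1 - π ω) / (δ ω * π ω + 1 - π ω) ^ 2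
      * A ω|m] =ᵐ[μ]
      fun ω => δ ω * (μ1f ω - μ0f ω) * (1 - π ω) / (δ ω * π ω + 1 - π ω) ^ 2 * π ω := by
    have h1 : μ[fun ω => δ ω * (μ1f ω - μ0f ω) * (1 - π ω) / (δ ω * π ω + 1 - π ω) ^ 2
        * A ω|m] =ᵐ[μ]
        fun ω => δ ω * (μ1f ω - μ0f ω) * (1 - π ω) / (δ ω * π ω + 1 - π ω) ^ 2
          * (μ[A|m]) ω :=
      condExp_mul_of_stronglyMeasurable_left hFam I_FaA hA_int
    filter_upwards [h1, hcA] with ω h1 h2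
    rw [h1, h2]
  have eFig' : μ[fun ω => 1 / (δ ω * π ω + 1 - π ω) *
      ((1 - A ω) * Y ω - μ0f ω * (1 - A ω)
        - δ ω * (μ1f ω - μ0f ω) * π ω / (δ ω * π ω + 1 - π ω) * (1 - A ω))|m] =ᵐ[μ]
      fun ω => 1 / (δ ω * π ω + 1 - π ω) *
        -(δ ω * (μ1f ω - μ0f ω) * π ω / (δ ω * π ω + 1 - π ω) * (1 - π ω)) := by
    have h1 : μ[fun ω => 1 / (δ ω * π ω + 1 - π ω) *
        ((1 - A ω) * Y ω - μ0f ω * (1 - A ω)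
          - δ ω * (μ1f ω - μ0f ω) * π ω / (δ ω * π ω + 1 - π ω) * (1 - A ω))|m] =ᵐ[μ]
        fun ω => 1 / (δ ω * π ω + 1 - π ω) *
          (μ[fun ω => (1 - A ω) * Y ω - μ0f ω * (1 - A ω)
            - δ ω * (μ1f ω - μ0f ω) * π ω / (δ ω * π ω + 1 - π ω) * (1 - A ω)|m]) ω :=
      condExp_mul_of_stronglyMeasurable_left hFim I_Fig' I_g'
    filter_upwards [h1, eg'] with ω h1 h2
    rw [h1, h2]
  -- assembling
  have hsum : (fun ω => ξ ω
      - (δ ω * π ω * μ1f ω + (1 - π ω) * μ0f ω) / (δ ω * π ω + 1 - π ω))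
      = (fun ω => δ ω / (δ ω * π ω + 1 - π ω) * (A ω * Y ω - μ1f ω * A ω))
        + ((fun ω => δ ω * (μ1f ω - μ0f ω) * (1 - π ω) / (δ ω * π ω + 1 - π ω) ^ 2 * A ω)
          + fun ω => 1 / (δ ω * π ω + 1 - π ω) *
            ((1 - A ω) * Y ω - μ0f ω * (1 - A ω)
              - δ ω * (μ1f ω - μ0f ω) * π ω / (δ ω * π ω + 1 - π ω) * (1 - A ω))) := by
    funext ω
    simp only [Pi.add_apply]
    linarith [hdecomp ω]
  have hc0 : μ[fun ω => ξ ω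
      - (δ ω * π ω * μ1f ω + (1 - π ω) * μ0f ω) / (δ ω * π ω + 1 - π ω)|m]
      =ᵐ[μ] fun _ => (0:ℝ) := by
    rw [hsum]
    have h1 := condExp_add (m := m) (μ := μ)
      (f := fun ω => δ ω / (δ ω * π ω + 1 - π ω) * (A ω * Y ω - μ1f ω * A ω))
      (g := (fun ω => δ ω * (μ1f ω - μ0f ω) * (1 - π ω) / (δ ω * π ω + 1 - π ω) ^ 2 * A ω)
        + fun ω => 1 / (δ ω * π ω + 1 - π ω) *
          ((1 - A ω) * Y ω - μ0f ω * (1 - A ω)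
            - δ ω * (μ1f ω - μ0f ω) * π ω / (δ ω * π ω + 1 - π ω) * (1 - A ω)))
      I_FG (I_FaA.add I_Fig')
    have h2 := condExp_add (m := m) (μ := μ)
      (f := fun ω => δ ω * (μ1f ω - μ0f ω) * (1 - π ω) / (δ ω * π ω + 1 - π ω) ^ 2 * A ω)
      (g := fun ω => 1 / (δ ω * π ω + 1 - π ω) *
        ((1 - A ω) * Y ω - μ0f ω * (1 - A ω)
          - δ ω * (μ1f ω - μ0f ω) * π ω / (δ ω * π ω + 1 - π ω) * (1 - A ω)))
      I_FaA I_Fig'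
    filter_upwards [h1, h2, eFG, eFaA, eFig'] with ω h1 h2 e1 e2 e3
    simp only [Pi.add_apply] at h1 h2
    rw [h1, h2, e1, e2, e3]
    have hD := hDne ω
    field_simp
    ring
  have hzero : ∫ ω, (ξ ω
      - (δ ω * π ω * μ1f ω + (1 - π ω) * μ0f ω) / (δ ω * π ω + 1 - π ω)) ∂μ = 0 := by
    rw [← integral_condExp hm, integral_congr_ae hc0]
    simp
  have hsub := integral_sub hξint I_v
  rw [hsub] at hzero
  linarith
end

section
/- Suppose the policy class D is closed under scalar shrinkage (for every d ∈ D and m ∈ (0,1), m·d ∈ D) and the value map d ↦ V(d) is L-Lipschitz with respect to the sup norm on policies d : X → [0,1]. If ĉ(d) ≤ c + ε for all d with c(d) ≤ c (where c, ε > 0 and ĉ, c are positively homogeneous: ĉ(md) = m·ĉ(d)), then max over the true feasible set {c(d) ≤ c} of V̂(d) minus max over the estimated feasible set {ĉ(d) ≤ c} of V̂(d) is at most Lε/(c+ε). -/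
/-!
Shrink the true optimum `d₁` by `m = c/(c+ε)`. Homogeneity turns `ĉ(d₁) ≤ c + ε` into
`ĉ(m d₁) ≤ c`, so `m d₁` competes in the estimated problem and `V̂(d₂) ≥ V̂(m d₁)`; since
policies take values in `[0,1]`, `m d₁` is within `1 - m = ε/(c+ε)` of `d₁` in sup norm, and
the Lipschitz bound finishes.
-/

open Set

lemma abs_sub_mul_self_le {m t : ℝ} (hm : m ≤ 1) (ht : t ∈ Icc (0 : ℝ) 1) :
    |t - m * t| ≤ 1 - m := by
  rw [← one_sub_mul, abs_mul, abs_of_nonneg (sub_nonneg.2 hm), abs_of_nonneg ht.1]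
  exact mul_le_of_le_one_right (sub_nonneg.2 hm) ht.2

lemma div_add_mem_Ioo {c ε : ℝ} (hc : 0 < c) (hε : 0 < ε) : c / (c + ε) ∈ Ioo (0 : ℝ) 1 :=
  ⟨by positivity, (div_lt_one (by positivity)).2 (by linarith)⟩

lemma one_sub_div_add {c ε : ℝ} (hc : 0 < c) (hε : 0 < ε) : 1 - c / (c + ε) = ε / (c + ε) := by
  field_simp
  ring

lemma div_add_mul_le {a c ε : ℝ} (hc : 0 < c) (hε : 0 < ε) (ha : a ≤ c + ε) :
    c / (c + ε) * a ≤ c :=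
  calc c / (c + ε) * a ≤ c / (c + ε) * (c + ε) := by gcongr
    _ = c := div_mul_cancel₀ c (by positivity)

lemma sub_apply_mul_le_of_lipschitz {X : Type*} {D : Set (X → ℝ)} {V : (X → ℝ) → ℝ} {L : ℝ}
    (hlip : ∀ d₁ ∈ D, ∀ d₂ ∈ D, ∀ M : ℝ, (∀ x, |d₁ x - d₂ x| ≤ M) → |V d₁ - V d₂| ≤ L * M)
    {d : X → ℝ} (hd : d ∈ D) (hrange : ∀ x, d x ∈ Icc (0 : ℝ) 1)
    {m : ℝ} (hm : m ≤ 1) (hmd : (fun x => m * d x) ∈ D) :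
    V d - V (fun x => m * d x) ≤ L * (1 - m) :=
  (le_abs_self _).trans <| hlip d hd _ hmd _ fun x => abs_sub_mul_self_le hm (hrange x)

theorem shrinkage_feasibility_gap_general {X : Type*} (D : Set (X → ℝ))
    (Vhat chat c₀ : (X → ℝ) → ℝ) (L c ε : ℝ)
    (hc : 0 < c) (hε : 0 < ε)
    (hrange : ∀ d ∈ D, ∀ x, d x ∈ Set.Icc (0:ℝ) 1)
    (hshrink : ∀ d ∈ D, ∀ m : ℝ, m ∈ Set.Ioo (0:ℝ) 1 → (fun x => m * d x) ∈ D)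
    (hlip : ∀ d₁ ∈ D, ∀ d₂ ∈ D, ∀ M : ℝ, (∀ x, |d₁ x - d₂ x| ≤ M) →
      |Vhat d₁ - Vhat d₂| ≤ L * M)
    (hhom : ∀ d ∈ D, ∀ m : ℝ, m ∈ Set.Ioo (0:ℝ) 1 → chat (fun x => m * d x) = m * chat d)
    (hfeas : ∀ d ∈ D, c₀ d ≤ c → chat d ≤ c + ε)
    (d₁ d₂ : X → ℝ)
    (hd₁D : d₁ ∈ D) (hd₁feas : c₀ d₁ ≤ c)
    (hd₂max : ∀ d ∈ D, chat d ≤ c → Vhat d ≤ Vhat d₂) :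
    Vhat d₁ - Vhat d₂ ≤ L * ε / (c + ε) := by
  set m := c / (c + ε)
  have hm : m ∈ Ioo (0 : ℝ) 1 := div_add_mem_Ioo hc hε
  have hmD : (fun x => m * d₁ x) ∈ D := hshrink d₁ hd₁D m hm
  have hm_feas : chat (fun x => m * d₁ x) ≤ c := by
    rw [hhom d₁ hd₁D m hm]
    exact div_add_mul_le hc hε (hfeas d₁ hd₁D hd₁feas)
  calc Vhat d₁ - Vhat d₂ ≤ Vhat d₁ - Vhat (fun x => m * d₁ x) := by
        gcongr
        exact hd₂max _ hmD hm_feas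
    _ ≤ L * (1 - m) := sub_apply_mul_le_of_lipschitz hlip hd₁D (hrange d₁ hd₁D) hm.2.le hmD
    _ = L * ε / (c + ε) := by rw [one_sub_div_add hc hε, mul_div_assoc]

/-- Shrinkage argument for constrained policy learning: if the policy class is closed under
scalar shrinkage, `V̂` is `L`-Lipschitz in sup norm, `ĉ` is positively homogeneous and
`ĉ(d) ≤ c + ε` whenever `c₀(d) ≤ c`, then the maximum of `V̂` over the true feasible set
exceeds its maximum over the estimated feasible set by at most `Lε/(c+ε)`. -/
theorem shrinkage_feasibility_gap {X : Type*} (D : Set (X → ℝ))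
    (Vhat chat c₀ : (X → ℝ) → ℝ) (L c ε : ℝ)
    (hL : 0 ≤ L) (hc : 0 < c) (hε : 0 < ε)
    (hrange : ∀ d ∈ D, ∀ x, d x ∈ Set.Icc (0:ℝ) 1)
    (hshrink : ∀ d ∈ D, ∀ m : ℝ, m ∈ Set.Ioo (0:ℝ) 1 → (fun x => m * d x) ∈ D)
    (hlip : ∀ d₁ ∈ D, ∀ d₂ ∈ D, ∀ M : ℝ, (∀ x, |d₁ x - d₂ x| ≤ M) →
      |Vhat d₁ - Vhat d₂| ≤ L * M)
    (hhom : ∀ d ∈ D, ∀ m : ℝ, m ∈ Set.Ioo (0:ℝ) 1 → chat (fun x => m * d x) = m * chat d)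
    (hc0nonneg : ∀ d ∈ D, 0 ≤ c₀ d) (hchatnonneg : ∀ d ∈ D, 0 ≤ chat d)
    (hfeas : ∀ d ∈ D, c₀ d ≤ c → chat d ≤ c + ε)
    (d₁ d₂ : X → ℝ)
    (hd₁D : d₁ ∈ D) (hd₁feas : c₀ d₁ ≤ c)
    (hd₁max : ∀ d ∈ D, c₀ d ≤ c → Vhat d ≤ Vhat d₁)
    (hd₂D : d₂ ∈ D) (hd₂feas : chat d₂ ≤ c)
    (hd₂max : ∀ d ∈ D, chat d ≤ c → Vhat d ≤ Vhat d₂) :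
    Vhat d₁ - Vhat d₂ ≤ L * ε / (c + ε) :=
  shrinkage_feasibility_gap_general D Vhat chat c₀ L c ε hc hε hrange hshrink hlip hhom hfeas d₁ d₂
    hd₁D hd₁feas hd₂max
end
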